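/- arXiv:1404.0569 — 5 statements merged into one kernel-verified Lean document; each statement's English description precedes it below -/
import Mathlib

section
/- Let n ≥ 3, let λ_1, ..., λ_n be real numbers summing to zero, and let σ_{ij} (for i ≠ j) be nonnegative real numbers with σ_{ij} = σ_{ji}. Set R = ∑_{i≠j} σ_{ij}. Then ∑_{i≠j} λ_i λ_j σ_{ij} - ((n-2)/(2n))·R·∑_k λ_k² ≤ -((n-1)/n)·∑_{i<j} (λ_i - λ_j)²·σ_{ij} ≤ 0. -/
/-!
Both sides are sums over the pairs `i < j` weighted by `σ_ij ≥ 0`, so it suffices to prove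
`2n λ_i λ_j + (n-1)(λ_i - λ_j)² ≤ (n-2) ∑ λ_k²` for each pair. The left side equals
`(n-2)(λ_i² + λ_j²) + (λ_i + λ_j)²`, and since `λ_i + λ_j = -∑_{k ≠ i,j} λ_k`, Cauchy–Schwarz
over the remaining `n - 2` indices bounds `(λ_i + λ_j)²` by `(n-2) ∑_{k ≠ i,j} λ_k²`.
-/

open Finset

section PairSums

variable {ι M : Type*} [Fintype ι] [LinearOrder ι] [AddCommMonoid M]

theorem sum_filter_ne_eq_sum_filter_lt_add_sum_filter_gt (i : ι) (f : ι → M) :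
    ∑ j ∈ univ.filter (· ≠ i), f j
      = ∑ j ∈ univ.filter (fun j => i < j), f j
        + ∑ j ∈ univ.filter (fun j => j < i), f j := by
  rw [← sum_union (disjoint_filter.2 fun j _ h => (lt_asymm h).elim), ← filter_or]
  simp only [ne_iff_lt_or_gt, or_comm]

theorem sum_sum_filter_gt_eq_sum_sum_filter_lt (g : ι → ι → M) :
    ∑ i, ∑ j ∈ univ.filter (fun j => j < i), g i j
      = ∑ j, ∑ i ∈ univ.filter (fun i => j < i), g i j :=
  sum_comm' (by simp)

theorem sum_sum_filter_ne_eq_two_nsmul {g : ι → ι → M} (hg : ∀ i j, g i j = g j i) :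
    ∑ i, ∑ j ∈ univ.filter (· ≠ i), g i j
      = 2 • ∑ i, ∑ j ∈ univ.filter (fun j => i < j), g i j := by
  simp only [sum_filter_ne_eq_sum_filter_lt_add_sum_filter_gt, sum_add_distrib,
    sum_sum_filter_gt_eq_sum_sum_filter_lt, two_nsmul]
  congr 1
  exact sum_congr rfl fun i _ => sum_congr rfl fun j _ => hg j i

end PairSums

theorem sq_add_le_of_sum_eq_zero {ι : Type*} [Fintype ι] {lam : ι → ℝ}
    (hsum : ∑ k, lam k = 0) {i j : ι} (hij : i ≠ j) :
    (lam i + lam j) ^ 2 ≤ (Fintype.card ι - 2) * (∑ k, lam k ^ 2 - lam i ^ 2 - lam j ^ 2) := by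
  classical
  have hpair : ({i, j} : Finset ι) ⊆ univ := subset_univ _
  have hrest : ∑ k ∈ univ \ {i, j}, lam k = -(lam i + lam j) := by
    linarith [sum_sdiff hpair (f := lam), sum_pair hij (f := lam)]
  have hrest_sq :
      ∑ k ∈ univ \ {i, j}, lam k ^ 2 = ∑ k, lam k ^ 2 - lam i ^ 2 - lam j ^ 2 := by
    linarith [sum_sdiff hpair (f := (lam · ^ 2)), sum_pair hij (f := (lam · ^ 2))]
  have hcard : (#(univ \ {i, j}) : ℝ) = Fintype.card ι - 2 := by
    rw [card_sdiff_of_subset hpair, card_pair hij, card_univ,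
      Nat.cast_sub (card_pair hij ▸ card_le_univ {i, j}), Nat.cast_ofNat]
  calc (lam i + lam j) ^ 2 = (∑ k ∈ univ \ {i, j}, lam k) ^ 2 := by rw [hrest, neg_sq]
    _ ≤ #(univ \ {i, j}) * ∑ k ∈ univ \ {i, j}, lam k ^ 2 := sq_sum_le_card_mul_sum_sq
    _ = _ := by rw [hcard, hrest_sq]

theorem pair_term_le_of_sum_eq_zero {ι : Type*} [Fintype ι] {lam : ι → ℝ}
    (hsum : ∑ k, lam k = 0) {i j : ι} (hij : i ≠ j) :
    2 * Fintype.card ι * (lam i * lam j) + (Fintype.card ι - 1) * (lam i - lam j) ^ 2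
      ≤ (Fintype.card ι - 2) * ∑ k, lam k ^ 2 := by
  linarith [sq_add_le_of_sum_eq_zero hsum hij]

theorem sum_pairs_le_of_sum_eq_zero {ι : Type*} [Fintype ι] [LinearOrder ι] {lam : ι → ℝ}
    {σ : ι → ι → ℝ} (hsum : ∑ k, lam k = 0) (hσ : ∀ i j, i < j → 0 ≤ σ i j) :
    2 * Fintype.card ι * ∑ i, ∑ j ∈ univ.filter (fun j => i < j), lam i * lam j * σ i j
        + (Fintype.card ι - 1)
          * ∑ i, ∑ j ∈ univ.filter (fun j => i < j), (lam i - lam j) ^ 2 * σ i j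
      ≤ (Fintype.card ι - 2) * (∑ k, lam k ^ 2)
          * ∑ i, ∑ j ∈ univ.filter (fun j => i < j), σ i j := by
  -- so that `mul_sum` below does not distribute into `∑ k, lam k ^ 2`
  set Q := ∑ k, lam k ^ 2
  simp only [mul_sum, ← sum_add_distrib]
  refine sum_le_sum fun i _ => sum_le_sum fun j hj => ?_
  have hij : i < j := (mem_filter.1 hj).2
  have := mul_le_mul_of_nonneg_right (pair_term_le_of_sum_eq_zero hsum hij.ne) (hσ i j hij)
  linarith

/-- Algebraic core of `R_{ikjl}E_{ij}E_{kl} ≤ ((n-2)/(2n)) R |E|²` for nonnegative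
sectional curvature: if `∑ λ_k = 0` and `σ_{ij} = σ_{ji} ≥ 0` for `i ≠ j`, with
`R = ∑_{i≠j} σ_{ij}`, then
`∑_{i≠j} λ_i λ_j σ_{ij} - ((n-2)/(2n)) R ∑ λ_k² ≤ -((n-1)/n) ∑_{i<j} (λ_i-λ_j)² σ_{ij} ≤ 0`. -/
theorem sectional_nonneg_estimate (n : ℕ) (hn : 3 ≤ n) (lam : Fin n → ℝ)
    (σ : Fin n → Fin n → ℝ)
    (hsum : ∑ k, lam k = 0)
    (hsymm : ∀ i j, σ i j = σ j i)
    (hnonneg : ∀ i j, i ≠ j → 0 ≤ σ i j)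
    (R : ℝ) (hR : R = ∑ i, ∑ j ∈ univ.filter (· ≠ i), σ i j) :
    ((∑ i, ∑ j ∈ univ.filter (· ≠ i), lam i * lam j * σ i j)
        - ((n : ℝ) - 2) / (2 * n) * R * ∑ k, (lam k) ^ 2
      ≤ -(((n : ℝ) - 1) / n) * ∑ i, ∑ j ∈ univ.filter (fun j => i < j), (lam i - lam j) ^ 2 * σ i j)
    ∧ -(((n : ℝ) - 1) / n) * ∑ i, ∑ j ∈ univ.filter (fun j => i < j), (lam i - lam j) ^ 2 * σ i j ≤ 0 := by
  have hn3 : (3 : ℝ) ≤ n := by exact_mod_cast hn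
  have hR2 : R = 2 * ∑ i, ∑ j ∈ univ.filter (fun j => i < j), σ i j := by
    rw [hR, sum_sum_filter_ne_eq_two_nsmul hsymm, two_nsmul, two_mul]
  have hS2 : ∑ i, ∑ j ∈ univ.filter (· ≠ i), lam i * lam j * σ i j
      = 2 * ∑ i, ∑ j ∈ univ.filter (fun j => i < j), lam i * lam j * σ i j := by
    rw [sum_sum_filter_ne_eq_two_nsmul fun i j => by rw [hsymm, mul_comm (lam i)],
      two_nsmul, two_mul]
  have hσ : ∀ i j, i < j → 0 ≤ σ i j := fun i j hij => hnonneg i j hij.ne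
  have key := sum_pairs_le_of_sum_eq_zero hsum hσ
  rw [Fintype.card_fin] at key
  have hT : 0 ≤ ∑ i, ∑ j ∈ univ.filter (fun j => i < j), (lam i - lam j) ^ 2 * σ i j :=
    sum_nonneg fun i _ => sum_nonneg fun j hj =>
      mul_nonneg (sq_nonneg _) (hσ i j (mem_filter.1 hj).2)
  have hcoeff : (0 : ℝ) ≤ (n - 1) / n := div_nonneg (by linarith) (by linarith)
  constructor
  · rw [hS2, hR2]
    field_simp
    linear_combination key
  · nlinarith
end

section
/- Let n ≥ 3, let σ_{ij} = σ_{ji} (i ≠ j, 1 ≤ i,j ≤ n) be real numbers with σ_{ij} ≤ 0, let μ_k = ∑_{i≠k} σ_{ik}, let R = ∑_k μ_k, and let λ_k = μ_k - R/n. Then ∑_{i≠j} λ_i λ_j σ_{ij} + (R/n)·∑_k λ_k² + ∑_k λ_k³ = ∑_{i<j} (λ_i + λ_j)²·σ_{ij} ≤ 0. -/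
open Finset

/-!
Substituting `μ_k = λ_k + R/n` turns `(R/n) λ_k² + λ_k³` into `λ_k² μ_k = ∑_{i≠k} λ_k² σ_{ik}`,
so the left-hand side is `∑_{i≠j} (λ_i λ_j + λ_i²) σ_{ij}`. Pairing the terms `(i, j)` and `(j, i)`
of this off-diagonal sum gives `∑_{i<j} (λ_i + λ_j)² σ_{ij}`, a sum of squares times
nonpositive numbers.
-/

section OffDiagonal

variable {ι M : Type*} [Fintype ι] [LinearOrder ι] [AddCommMonoid M]

theorem sum_sum_filter_ne_eq_sum_sum_filter_lt_add_swap (f : ι → ι → M) :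
    ∑ i, ∑ j ∈ univ.filter (· ≠ i), f i j
      = ∑ i, ∑ j ∈ univ.filter (fun j => i < j), (f i j + f j i) := by
  have hsplit : ∀ i j, (if j ≠ i then f i j else 0)
      = (if i < j then f i j else 0) + if j < i then f i j else 0 := by
    intro i j
    rcases lt_trichotomy i j with h | rfl | h
    · simp [h, h.ne', h.not_gt]
    · simp
    · simp [h, h.ne, h.not_gt]
  simp only [sum_filter, hsplit, sum_add_distrib]
  rw [sum_comm (f := fun i j => if j < i then f i j else 0)]

end OffDiagonal

section SectionalCurvature

variable {ι α : Type*} [Fintype ι] [LinearOrder ι]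

theorem sum_ne_mul_add_sq_add_cube_eq_sum_lt_sq_mul [CommRing α] (σ : ι → ι → α)
    (hsymm : ∀ i j, σ i j = σ j i) (lam : ι → α) (c : α)
    (hlam : ∀ k, lam k = ∑ i ∈ univ.filter (· ≠ k), σ i k - c) :
    (∑ i, ∑ j ∈ univ.filter (· ≠ i), lam i * lam j * σ i j)
        + c * ∑ k, lam k ^ 2 + ∑ k, lam k ^ 3
      = ∑ i, ∑ j ∈ univ.filter (fun j => i < j), (lam i + lam j) ^ 2 * σ i j := by
  have hdiag : c * ∑ k, lam k ^ 2 + ∑ k, lam k ^ 3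
      = ∑ i, ∑ j ∈ univ.filter (· ≠ i), lam i ^ 2 * σ i j := by
    rw [mul_sum, ← sum_add_distrib]
    refine sum_congr rfl fun k _ => ?_
    have hrow : lam k + c = ∑ i ∈ univ.filter (· ≠ k), σ k i := by
      simp only [hlam k, hsymm k, sub_add_cancel]
    rw [← mul_sum, ← hrow]
    ring
  calc _ = ∑ i, ∑ j ∈ univ.filter (· ≠ i), (lam i * lam j + lam i ^ 2) * σ i j := by
        simp only [add_assoc, hdiag, ← sum_add_distrib, add_mul]
    _ = _ := by
        rw [sum_sum_filter_ne_eq_sum_sum_filter_lt_add_swap]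
        refine sum_congr rfl fun i _ => sum_congr rfl fun j _ => ?_
        rw [hsymm j i]
        ring

theorem sum_sum_filter_lt_sq_mul_nonpos [CommRing α] [LinearOrder α] [IsStrictOrderedRing α]
    (σ : ι → ι → α) (hnonpos : ∀ i j, i ≠ j → σ i j ≤ 0) (lam : ι → α) :
    ∑ i, ∑ j ∈ univ.filter (fun j => i < j), (lam i + lam j) ^ 2 * σ i j ≤ 0 :=
  sum_nonpos fun i _ => sum_nonpos fun j hj =>
    mul_nonpos_of_nonneg_of_nonpos (sq_nonneg _) (hnonpos i j (mem_filter.mp hj).2.ne)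

end SectionalCurvature

theorem sectional_nonpos_identity_general (n : ℕ) (σ : Fin n → Fin n → ℝ)
    (hsymm : ∀ i j, σ i j = σ j i)
    (hnonpos : ∀ i j, i ≠ j → σ i j ≤ 0)
    (μ : Fin n → ℝ) (hμ : ∀ k, μ k = ∑ i ∈ univ.filter (· ≠ k), σ i k)
    (R : ℝ)
    (lam : Fin n → ℝ) (hlam : ∀ k, lam k = μ k - R / n) :
    ((∑ i, ∑ j ∈ univ.filter (· ≠ i), lam i * lam j * σ i j)
        + R / n * ∑ k, (lam k) ^ 2 + ∑ k, (lam k) ^ 3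
      = ∑ i, ∑ j ∈ univ.filter (fun j => i < j), (lam i + lam j) ^ 2 * σ i j)
    ∧ ∑ i, ∑ j ∈ univ.filter (fun j => i < j), (lam i + lam j) ^ 2 * σ i j ≤ 0 :=
  ⟨sum_ne_mul_add_sq_add_cube_eq_sum_lt_sq_mul σ hsymm lam (R / n) fun k => hμ k ▸ hlam k,
    sum_sum_filter_lt_sq_mul_nonpos σ hnonpos lam⟩

/-- Algebraic core of the nonpositive sectional curvature estimate: with
`σ_{ij} = σ_{ji} ≤ 0` (`i ≠ j`), `μ_k = ∑_{i≠k} σ_{ik}`, `R = ∑_k μ_k`,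
`λ_k = μ_k - R/n`, one has
`∑_{i≠j} λ_i λ_j σ_{ij} + (R/n) ∑ λ_k² + ∑ λ_k³ = ∑_{i<j} (λ_i+λ_j)² σ_{ij} ≤ 0`. -/
theorem sectional_nonpos_identity (n : ℕ) (hn : 3 ≤ n) (σ : Fin n → Fin n → ℝ)
    (hsymm : ∀ i j, σ i j = σ j i)
    (hnonpos : ∀ i j, i ≠ j → σ i j ≤ 0)
    (μ : Fin n → ℝ) (hμ : ∀ k, μ k = ∑ i ∈ univ.filter (· ≠ k), σ i k)
    (R : ℝ) (hR : R = ∑ k, μ k)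
    (lam : Fin n → ℝ) (hlam : ∀ k, lam k = μ k - R / n) :
    ((∑ i, ∑ j ∈ univ.filter (· ≠ i), lam i * lam j * σ i j)
        + R / n * ∑ k, (lam k) ^ 2 + ∑ k, (lam k) ^ 3
      = ∑ i, ∑ j ∈ univ.filter (fun j => i < j), (lam i + lam j) ^ 2 * σ i j)
    ∧ ∑ i, ∑ j ∈ univ.filter (fun j => i < j), (lam i + lam j) ^ 2 * σ i j ≤ 0 :=
  sectional_nonpos_identity_general n σ hsymm hnonpos μ hμ R lam hlam
end

section
/- Let n = 4 and let σ_{ij} = σ_{ji} (i ≠ j) be nonpositive reals; with λ_k, μ_k, R as in Proposition 4.2 one has ∑_{i<j}(λ_i+λ_j)²σ_{ij} = (σ_{12}-σ_{34})²(σ_{12}+σ_{34}) + (σ_{13}-σ_{24})²(σ_{13}+σ_{24}) + (σ_{14}-σ_{23})²(σ_{14}+σ_{23}). Consequently, if this quantity is zero and all σ_{ij} ≤ 0, then σ_{12}=σ_{34}, σ_{13}=σ_{24}, σ_{14}=σ_{23}, and hence all λ_k = 0. -/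
open Finset

/-!
Writing `λ_k = μ_k - R/4` and `R = ∑ μ = μ_i + μ_j + μ_k + μ_l` for a permutation `(i, j, k, l)`
of the indices, symmetry of `σ` gives `λ_i + λ_j = σ_ij - σ_kl`. The six terms of the sum therefore
pair up along opposite edges as `(a - b)² a + (b - a)² b = (a - b)² (a + b)` with `a = σ_ij`,
`b = σ_kl`. For nonpositive curvatures each of the three summands is `≤ 0` and vanishes only
when `a = b`; then `λ_i + λ_j = 0` for all `i ≠ j`, which forces every `λ_k = 0`.
-/

section Permutation

variable {ι : Type*} [Fintype ι]

theorem Function.Bijective.sum_eq_of_fin_four {M : Type*} [AddCommMonoid M] {i j k l : ι}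
    (h : Function.Bijective ![i, j, k, l]) (f : ι → M) :
    ∑ m, f m = f i + f j + f k + f l := by
  rw [← h.sum_comp]
  simp [Fin.sum_univ_four]

theorem add_eq_sub_of_bijective_fin_four [DecidableEq ι] (σ : ι → ι → ℝ)
    (hsymm : ∀ i j, σ i j = σ j i)
    (μ : ι → ℝ) (hμ : ∀ k, μ k = ∑ i ∈ univ.filter (· ≠ k), σ i k)
    (R : ℝ) (hR : R = ∑ k, μ k)
    (lam : ι → ℝ) (hlam : ∀ k, lam k = μ k - R / 4)
    {i j k l : ι} (h : Function.Bijective ![i, j, k, l]) :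
    lam i + lam j = σ i j - σ k l := by
  have hcol : ∀ m, μ m = σ i m + σ j m + σ k m + σ l m - σ m m := fun m => by
    rw [hμ, filter_ne', sum_erase_eq_sub (mem_univ m), h.sum_eq_of_fin_four]
  rw [hlam, hlam, hR, h.sum_eq_of_fin_four, hcol, hcol, hcol, hcol]
  linarith [hsymm i j, hsymm i k, hsymm i l, hsymm j k, hsymm j l, hsymm k l]

end Permutation

theorem Fin.sum_sum_filter_lt_four {M : Type*} [AddCommMonoid M] (f : Fin 4 → Fin 4 → M) :
    ∑ i, ∑ j ∈ univ.filter (fun j => i < j), f i j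
      = f 0 1 + f 0 2 + f 0 3 + f 1 2 + f 1 3 + f 2 3 := by
  simp [Fin.sum_univ_four, sum_filter, add_assoc]

theorem sq_sub_mul_add_nonpos {a b : ℝ} (ha : a ≤ 0) (hb : b ≤ 0) :
    (a - b) ^ 2 * (a + b) ≤ 0 :=
  mul_nonpos_of_nonneg_of_nonpos (sq_nonneg _) (by linarith)

theorem eq_of_sq_sub_mul_add_eq_zero {a b : ℝ} (ha : a ≤ 0) (hb : b ≤ 0)
    (h : (a - b) ^ 2 * (a + b) = 0) : a = b := by
  rcases mul_eq_zero.mp h with h | h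
  · exact sub_eq_zero.mp (pow_eq_zero_iff two_ne_zero |>.mp h)
  · linarith

theorem eq_of_sum_three_sq_sub_mul_add_eq_zero {a b c d e f : ℝ}
    (ha : a ≤ 0) (hb : b ≤ 0) (hc : c ≤ 0) (hd : d ≤ 0) (he : e ≤ 0) (hf : f ≤ 0)
    (h : (a - b) ^ 2 * (a + b) + (c - d) ^ 2 * (c + d) + (e - f) ^ 2 * (e + f) = 0) :
    a = b ∧ c = d ∧ e = f := by
  have hab := sq_sub_mul_add_nonpos ha hb
  have hcd := sq_sub_mul_add_nonpos hc hd
  have hef := sq_sub_mul_add_nonpos he hf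
  exact ⟨eq_of_sq_sub_mul_add_eq_zero ha hb (by linarith),
    eq_of_sq_sub_mul_add_eq_zero hc hd (by linarith),
    eq_of_sq_sub_mul_add_eq_zero he hf (by linarith)⟩

/-- In dimension 4, with `μ_k = ∑_{i≠k} σ_{ik}`, `R = ∑_k μ_k`, `λ_k = μ_k - R/4`:
`∑_{i<j}(λ_i+λ_j)²σ_{ij}` equals the displayed combination of opposite sectional
curvatures; if it vanishes and all `σ_{ij} ≤ 0`, the opposite curvatures agree and
all `λ_k = 0`. -/
theorem dim4_opposite_curvatures (σ : Fin 4 → Fin 4 → ℝ)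
    (hsymm : ∀ i j, σ i j = σ j i)
    (hnonpos : ∀ i j, i ≠ j → σ i j ≤ 0)
    (μ : Fin 4 → ℝ) (hμ : ∀ k, μ k = ∑ i ∈ univ.filter (· ≠ k), σ i k)
    (R : ℝ) (hR : R = ∑ k, μ k)
    (lam : Fin 4 → ℝ) (hlam : ∀ k, lam k = μ k - R / 4) :
    (∑ i, ∑ j ∈ univ.filter (fun j => i < j), (lam i + lam j) ^ 2 * σ i j
      = (σ 0 1 - σ 2 3) ^ 2 * (σ 0 1 + σ 2 3)
        + (σ 0 2 - σ 1 3) ^ 2 * (σ 0 2 + σ 1 3)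
        + (σ 0 3 - σ 1 2) ^ 2 * (σ 0 3 + σ 1 2))
    ∧ ((∑ i, ∑ j ∈ univ.filter (fun j => i < j), (lam i + lam j) ^ 2 * σ i j = 0) →
        σ 0 1 = σ 2 3 ∧ σ 0 2 = σ 1 3 ∧ σ 0 3 = σ 1 2 ∧ ∀ k, lam k = 0) := by
  have hpair (i j k l : Fin 4) (h : Function.Bijective ![i, j, k, l]) :=
    add_eq_sub_of_bijective_fin_four σ hsymm μ hμ R hR lam hlam h
  have h01 := hpair 0 1 2 3 (by decide)
  have h23 := hpair 2 3 0 1 (by decide)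
  have h02 := hpair 0 2 1 3 (by decide)
  have h13 := hpair 1 3 0 2 (by decide)
  have h03 := hpair 0 3 1 2 (by decide)
  have h12 := hpair 1 2 0 3 (by decide)
  have key : ∑ i, ∑ j ∈ univ.filter (fun j => i < j), (lam i + lam j) ^ 2 * σ i j
      = (σ 0 1 - σ 2 3) ^ 2 * (σ 0 1 + σ 2 3)
        + (σ 0 2 - σ 1 3) ^ 2 * (σ 0 2 + σ 1 3)
        + (σ 0 3 - σ 1 2) ^ 2 * (σ 0 3 + σ 1 2) := by
    rw [Fin.sum_sum_filter_lt_four, h01, h02, h03, h12, h13, h23]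
    ring
  refine ⟨key, fun hzero => ?_⟩
  rw [key] at hzero
  obtain ⟨e1, e2, e3⟩ := eq_of_sum_three_sq_sub_mul_add_eq_zero
    (hnonpos 0 1 (by decide)) (hnonpos 2 3 (by decide)) (hnonpos 0 2 (by decide))
    (hnonpos 1 3 (by decide)) (hnonpos 0 3 (by decide)) (hnonpos 1 2 (by decide)) hzero
  refine ⟨e1, e2, e3, fun k => ?_⟩
  fin_cases k <;> simp only [Fin.zero_eta, Fin.mk_one, Fin.reduceFinMk] <;> linarith
end

section
/- If λ_1, λ_2, λ_3 are reals with λ_1+λ_2+λ_3 = 0, then |λ_1³+λ_2³+λ_3³| ≤ (1/√6)·(λ_1²+λ_2²+λ_3²)^{3/2}. -/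
/-- Sharp cubic estimate for a trace-free symmetric 2-tensor in dimension 3: if
`λ_1 + λ_2 + λ_3 = 0` then `|λ_1³+λ_2³+λ_3³| ≤ (1/√6)(λ_1²+λ_2²+λ_3²)^{3/2}`. -/
theorem cubic_tracefree_estimate (l1 l2 l3 : ℝ) (h : l1 + l2 + l3 = 0) :
    |l1 ^ 3 + l2 ^ 3 + l3 ^ 3|
      ≤ (1 / Real.sqrt 6) * (l1 ^ 2 + l2 ^ 2 + l3 ^ 2) ^ ((3 : ℝ) / 2) := by
  have hS : (0:ℝ) ≤ l1 ^ 2 + l2 ^ 2 + l3 ^ 2 := by positivity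
  set S := l1 ^ 2 + l2 ^ 2 + l3 ^ 2 with hSdef
  set x := l1 ^ 3 + l2 ^ 3 + l3 ^ 3 with hxdef
  have h3 : l3 = -l1 - l2 := by linarith
  have key : x ^ 2 ≤ S ^ 3 / 6 := by
    subst h3
    simp only [hxdef, hSdef]
    nlinarith [sq_nonneg ((l1 - l2) * (2*l1 + l2) * (l1 + 2*l2))]
  have h6 : (Real.sqrt 6) ^ 2 = 6 := Real.sq_sqrt (by norm_num)
  have hpow : (S ^ ((3:ℝ)/2)) ^ 2 = S ^ 3 := by
    rw [← Real.rpow_natCast (S ^ ((3:ℝ)/2)) 2, ← Real.rpow_mul hS,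
      show ((3:ℝ)/2) * ((2:ℕ):ℝ) = ((3:ℕ):ℝ) by norm_num, Real.rpow_natCast]
  have hrhs_sq : ((1 / Real.sqrt 6) * S ^ ((3:ℝ)/2)) ^ 2 = S ^ 3 / 6 := by
    rw [mul_pow, hpow, div_pow, one_pow, h6]
    ring
  have hrhs_nonneg : 0 ≤ (1 / Real.sqrt 6) * S ^ ((3:ℝ)/2) := by positivity
  have := Real.sqrt_le_sqrt (key.trans_eq hrhs_sq.symm)
  rwa [Real.sqrt_sq_eq_abs, Real.sqrt_sq hrhs_nonneg] at this
end

section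
/- On a Riemannian manifold of dimension n ≥ 3, the Cotton tensor C_{ijk} = ∇_k R_{ij} - ∇_j R_{ik} - (1/(2(n-1)))(∇_k R·g_{ij} - ∇_j R·g_{ik}) satisfies the pointwise identity (1/2)|C|² = |∇E|² - ((n-2)²/(4n²(n-1)))|∇R|² - ∇_k E_{ij}·∇_j E_{ik}, where E is the trace-free Ricci tensor. -/
/-!
With `c = 1/n - 1/(2(n-1)) = (n-2)/(2n(n-1))` one has
`C_{ijk} = (∇_k E_{ij} - ∇_j E_{ik}) + c (∇_k R δ_{ij} - ∇_j R δ_{ik})`,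
so `|C|²` splits into `2|∇E|² - 2 ∇_k E_{ij} ∇_j E_{ik}`, a cross term, and `c² · 2(n-1)|∇R|²`.
Since `E` is trace-free and `∇_i E_{ij} = ((n-2)/(2n)) ∇_j R` by the contracted Bianchi identity,
the cross term is `-2c (n-2)/n |∇R|²`, and the two multiples of `|∇R|²` add up to
`-(n-2)²/(2n²(n-1)) |∇R|²`.
-/

open Finset

section

variable {ι : Type*} [Fintype ι]

theorem sum_sq_sub_swap (T : ι → ι → ι → ℝ) :
    ∑ i, ∑ j, ∑ k, (T k i j - T j i k) ^ 2
      = 2 * ∑ i, ∑ j, ∑ k, T k i j ^ 2 - 2 * ∑ i, ∑ j, ∑ k, T k i j * T j i k := by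
  have hswap : ∑ i, ∑ j, ∑ k, T j i k ^ 2 = ∑ i, ∑ j, ∑ k, T k i j ^ 2 :=
    sum_congr rfl fun _ _ => sum_comm
  simp only [sub_sq, sum_add_distrib, sum_sub_distrib, hswap, mul_assoc, ← mul_sum]
  ring

variable [DecidableEq ι]

theorem sum_sub_swap_mul_kronecker (T : ι → ι → ι → ℝ) (v : ι → ℝ) :
    ∑ i, ∑ j, ∑ k, (T k i j - T j i k)
        * (v k * (if i = j then 1 else 0) - v j * (if i = k then 1 else 0))
      = 2 * ∑ k, (∑ i, T k i i) * v k - 2 * ∑ j, (∑ i, T i i j) * v j := by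
  simp only [mul_ite, mul_one, mul_zero, mul_sub, sub_mul, sum_sub_distrib, sum_ite_irrel,
    sum_const_zero, sum_ite_eq, mem_univ, ↓reduceIte, sum_mul]
  rw [sum_comm (f := fun k i => T k i i * v k), sum_comm (f := fun j i => T i i j * v j)]
  ring

theorem sum_sq_kronecker (v : ι → ℝ) :
    ∑ i, ∑ j, ∑ k, (v k * (if i = j then 1 else 0) - v j * (if i = k then 1 else 0)) ^ 2
      = 2 * (Fintype.card ι - 1) * ∑ j, v j ^ 2 := by
  simp only [mul_ite, mul_one, mul_zero, sub_sq, ite_pow, ne_eq, OfNat.ofNat_ne_zero,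
    not_false_eq_true, zero_pow, ite_mul, zero_mul, sum_add_distrib, sum_sub_distrib,
    sum_ite_irrel, sum_const_zero, sum_ite_eq, mem_univ, ↓reduceIte, sum_const, card_univ,
    nsmul_eq_mul, mul_assoc, ← sq, ← mul_sum]
  ring

theorem sum_sq_sub_swap_add_kronecker (T : ι → ι → ι → ℝ) (v : ι → ℝ) (a c : ℝ)
    (htrace : ∀ k, ∑ i, T k i i = 0) (hdiv : ∀ j, ∑ i, T i i j = a * v j) :
    ∑ i, ∑ j, ∑ k, (T k i j - T j i k
        + c * (v k * (if i = j then 1 else 0) - v j * (if i = k then 1 else 0))) ^ 2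
      = 2 * ∑ i, ∑ j, ∑ k, T k i j ^ 2 - 2 * ∑ i, ∑ j, ∑ k, T k i j * T j i k
        + (2 * (Fintype.card ι - 1) * c ^ 2 - 4 * a * c) * ∑ j, v j ^ 2 := by
  have hcross : ∑ i, ∑ j, ∑ k, (T k i j - T j i k)
      * (v k * (if i = j then 1 else 0) - v j * (if i = k then 1 else 0))
        = -(2 * a) * ∑ j, v j ^ 2 := by
    rw [sum_sub_swap_mul_kronecker]
    simp only [htrace, hdiv, zero_mul, sum_const_zero, mul_assoc, ← sq, ← mul_sum]
    ring
  have hexpand (x y : ℝ) : (x + c * y) ^ 2 = x ^ 2 + 2 * c * (x * y) + c ^ 2 * y ^ 2 := by ring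
  simp only [hexpand, sum_add_distrib, ← mul_sum]
  rw [sum_sq_sub_swap T, hcross, sum_sq_kronecker]
  ring

end

theorem cotton_pointwise_identity_general (n : ℕ) (hn : 3 ≤ n)
    (DRic : Fin n → Fin n → Fin n → ℝ) (DR : Fin n → ℝ)
    (htrace : ∀ k, ∑ i, DRic k i i = DR k)
    (hBianchi : ∀ j, ∑ i, DRic i i j = (1 / 2) * DR j)
    (C : Fin n → Fin n → Fin n → ℝ)
    (hC : ∀ i j k, C i j k = DRic k i j - DRic j i k
      - 1 / (2 * ((n : ℝ) - 1)) * (DR k * (if i = j then (1 : ℝ) else 0)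
          - DR j * (if i = k then (1 : ℝ) else 0)))
    (DE : Fin n → Fin n → Fin n → ℝ)
    (hDE : ∀ k i j, DE k i j
      = DRic k i j - 1 / (n : ℝ) * DR k * (if i = j then (1 : ℝ) else 0)) :
    (1 / 2) * ∑ i, ∑ j, ∑ k, (C i j k) ^ 2
      = (∑ k, ∑ i, ∑ j, (DE k i j) ^ 2)
        - ((n : ℝ) - 2) ^ 2 / (4 * n ^ 2 * ((n : ℝ) - 1)) * ∑ j, (DR j) ^ 2
        - ∑ i, ∑ j, ∑ k, DE k i j * DE j i k := by
  have hn0 : (n : ℝ) ≠ 0 := by positivity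
  have hn1 : (n : ℝ) - 1 ≠ 0 := by
    have : (3 : ℝ) ≤ n := by exact_mod_cast hn
    linarith
  have hDE_trace (k : Fin n) : ∑ i, DE k i i = 0 := by
    simp [hDE, sum_sub_distrib, htrace, hn0]
  have hDE_div (j : Fin n) : ∑ i, DE i i j = ((n - 2) / (2 * n)) * DR j := by
    simp only [hDE, mul_ite, mul_one, mul_zero, sum_sub_distrib, hBianchi, sum_ite_eq', mem_univ,
      ↓reduceIte]
    field_simp
  have hC_DE (i j k : Fin n) : C i j k = DE k i j - DE j i k + ((n - 2) / (2 * n * (n - 1)))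
      * (DR k * (if i = j then 1 else 0) - DR j * (if i = k then 1 else 0)) := by
    rw [hC, hDE, hDE]
    field_simp
    ring
  have hDE_reorder : ∑ k, ∑ i, ∑ j, DE k i j ^ 2 = ∑ i, ∑ j, ∑ k, DE k i j ^ 2 := by
    rw [sum_comm]
    exact sum_congr rfl fun _ _ => sum_comm
  simp only [hC_DE, sum_sq_sub_swap_add_kronecker DE DR _ _ hDE_trace hDE_div, hDE_reorder,
    Fintype.card_fin]
  field_simp
  ring

/-- Pointwise Cotton identity in an orthonormal frame: with
`C_{ijk} = ∇_k R_{ij} - ∇_j R_{ik} - (1/(2(n-1)))(∇_k R·δ_{ij} - ∇_j R·δ_{ik})` and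
`∇_k E_{ij} = ∇_k R_{ij} - (1/n)∇_k R·δ_{ij}`, one has
`(1/2)|C|² = |∇E|² - ((n-2)²/(4n²(n-1)))|∇R|² - ∇_k E_{ij}∇_j E_{ik}`. -/
theorem cotton_pointwise_identity (n : ℕ) (hn : 3 ≤ n)
    (DRic : Fin n → Fin n → Fin n → ℝ) (DR : Fin n → ℝ)
    (hsymm : ∀ k i j, DRic k i j = DRic k j i)
    (htrace : ∀ k, ∑ i, DRic k i i = DR k)
    (hBianchi : ∀ j, ∑ i, DRic i i j = (1 / 2) * DR j)
    (C : Fin n → Fin n → Fin n → ℝ)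
    (hC : ∀ i j k, C i j k = DRic k i j - DRic j i k
      - 1 / (2 * ((n : ℝ) - 1)) * (DR k * (if i = j then (1 : ℝ) else 0)
          - DR j * (if i = k then (1 : ℝ) else 0)))
    (DE : Fin n → Fin n → Fin n → ℝ)
    (hDE : ∀ k i j, DE k i j
      = DRic k i j - 1 / (n : ℝ) * DR k * (if i = j then (1 : ℝ) else 0)) :
    (1 / 2) * ∑ i, ∑ j, ∑ k, (C i j k) ^ 2
      = (∑ k, ∑ i, ∑ j, (DE k i j) ^ 2)
        - ((n : ℝ) - 2) ^ 2 / (4 * n ^ 2 * ((n : ℝ) - 1)) * ∑ j, (DR j) ^ 2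
        - ∑ i, ∑ j, ∑ k, DE k i j * DE j i k :=
  cotton_pointwise_identity_general n hn DRic DR htrace hBianchi C hC DE hDE
end
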